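/- Fix j ∈ {1,…,n} and define P[I_j] as the sum of p(w) over all legitimate extended states w = (x; a) with a_j = I. Then P[I_j] = B · ∑_{b=0}^{min(n−1,m)} ∑_{x=0}^{m−b} (∏_{r=0}^{x+b−1} θ(r)) · (ρ^x/x!) · c_{j,b}, where ρ = ∑_{i=1}^k ρ_i and c_{j,b} = ∑_{(a_l)_{l≠j} ∈ {I,W,T}^{n−1} : #{l≠j : a_l=T} = b} ∏_{l∈{1,…,n}∖{j}} (α_l/β_l)^{[a_l=W]} (α_l u_l/(β_l v_l))^{[a_l=T]}. -/

import Mathlib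

/-- Activity state of a persistent user: Idle, Waiting, or Transmitting. -/
inductive Act : Type
  | I : Act
  | W : Act
  | T : Act
deriving DecidableEq

instance : Fintype Act :=
  ⟨{Act.I, Act.W, Act.T}, fun x => by cases x <;> simp⟩

/-- Number of persistent users that are transmitting. -/
def busyP {n : ℕ} (a : Fin n → Act) : ℕ :=
  (Finset.univ.filter (fun j => a j = Act.T)).card

/-- The factor `(α/β)^{[a=W]} (αu/(βv))^{[a=T]}` contributed by one persistent user. -/
noncomputable def fac (α β u v : ℝ) : Act → ℝ
  | Act.I => 1
  | Act.W => α / β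
  | Act.T => α * u / (β * v)

lemma multinom_sum (k xt : ℕ) (ρ : Fin k → ℝ) :
    ∑ x ∈ Finset.Nat.antidiagonalTuple k xt, ∏ i, ρ i ^ x i / (x i).factorial
      = (∑ i, ρ i) ^ xt / xt.factorial := by
  rw [← Finset.piAntidiag_univ_fin_eq_antidiagonalTuple,
    Finset.sum_pow_eq_sum_piAntidiag, Finset.sum_div]
  refine Finset.sum_congr rfl fun x hx => ?_
  simp only [Finset.mem_piAntidiag] at hx
  have hs : (∑ i, x i) = xt := hx.1
  have hspec := Nat.multinomial_spec Finset.univ x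
  rw [hs] at hspec
  have hcast : ((∏ i, (x i).factorial : ℕ) : ℝ) * (Nat.multinomial Finset.univ x : ℝ)
      = (xt.factorial : ℝ) := by exact_mod_cast congrArg Nat.cast hspec
  rw [Finset.prod_div_distrib]
  have h1 : (0:ℝ) < ∏ i, ((x i).factorial : ℝ) := by positivity
  have h2 : (0:ℝ) < (xt.factorial : ℝ) := by positivity
  push_cast at hcast
  field_simp
  rw [← hcast]; ring


/-- formula for the idle probability of persistent user `j`:
`P[I_j] = B ∑_{b=0}^{min(n-1,m)} ∑_{x=0}^{m-b} (∏_{r=0}^{x+b-1} θ(r)) (ρ^x/x!) c_{j,b}`.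
Here vectors over `{I,W,T}^{n-1}` (indexed by the users other than `j`) are encoded as
full vectors `a : Fin n → Act` with `a j = Act.I`. -/
theorem idle_probability_formula
    (m k n : ℕ) (hm : 0 < m) (hk : 0 < k) (hn : 0 < n)
    (θ : ℕ → ℝ)
    (hθ1 : ∀ b ≤ m, 0 ≤ θ b ∧ θ b ≤ 1)
    (hθ2 : ∀ b < m, 0 < θ b)
    (hθ3 : θ m = 0)
    (lam μ : Fin k → ℝ) (hlam : ∀ i, 0 < lam i) (hμ : ∀ i, 0 < μ i)
    (α β u v : Fin n → ℝ)
    (hα : ∀ j, 0 < α j) (hβ : ∀ j, 0 < β j) (hu : ∀ j, 0 < u j) (hv : ∀ j, 0 < v j)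
    (ρ : Fin k → ℝ) (hρ : ∀ i, ρ i = lam i / μ i)
    (B : ℝ) (hB : 0 < B)
    (p : (Fin k → ℕ) → (Fin n → Act) → ℝ)
    (hp : ∀ (x : Fin k → ℕ) (a : Fin n → Act),
      p x a = B * (∏ r ∈ Finset.range (∑ i, x i + busyP a), θ r) *
        (∏ i, ρ i ^ (x i) / (x i).factorial) *
        ∏ j, fac (α j) (β j) (u j) (v j) (a j))
    (j : Fin n) (PI : ℝ)
    (hPI : PI = ∑ a ∈ Finset.univ.filter (fun a : Fin n → Act => a j = Act.I),
      ∑ xt ∈ Finset.range (m + 1 - busyP a),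
        ∑ x ∈ Finset.Nat.antidiagonalTuple k xt, p x a)
    (cj : ℕ → ℝ)
    (hcj : ∀ b, cj b = ∑ a ∈ Finset.univ.filter
        (fun a : Fin n → Act => a j = Act.I ∧ busyP a = b),
      ∏ l ∈ Finset.univ.erase j, fac (α l) (β l) (u l) (v l) (a l)) :
    PI = B * ∑ b ∈ Finset.range (min (n - 1) m + 1), ∑ xt ∈ Finset.range (m - b + 1),
      (∏ r ∈ Finset.range (xt + b), θ r) * (∑ i, ρ i) ^ xt / xt.factorial * cj b := by
  classical
  set G : ℕ → ℝ := fun b => B * ∑ xt ∈ Finset.range (m + 1 - b),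
      (∏ r ∈ Finset.range (xt + b), θ r) * (∑ i, ρ i) ^ xt / xt.factorial with hG
  set F : (Fin n → Act) → ℝ :=
      fun a => ∏ l ∈ Finset.univ.erase j, fac (α l) (β l) (u l) (v l) (a l) with hF
  have key : ∀ a ∈ Finset.univ.filter (fun a : Fin n → Act => a j = Act.I),
      (∑ xt ∈ Finset.range (m + 1 - busyP a),
        ∑ x ∈ Finset.Nat.antidiagonalTuple k xt, p x a) = G (busyP a) * F a := by
    intro a ha
    simp only [Finset.mem_filter] at ha
    have hfj : (∏ l, fac (α l) (β l) (u l) (v l) (a l)) = F a := by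
      rw [hF, ← Finset.mul_prod_erase Finset.univ _ (Finset.mem_univ j), ha.2]
      simp [fac]
    have hsum : ∀ xt, ∑ x ∈ Finset.Nat.antidiagonalTuple k xt, p x a
        = B * ((∏ r ∈ Finset.range (xt + busyP a), θ r) *
          ((∑ i, ρ i) ^ xt / xt.factorial) * F a) := by
      intro xt
      calc ∑ x ∈ Finset.Nat.antidiagonalTuple k xt, p x a
          = ∑ x ∈ Finset.Nat.antidiagonalTuple k xt,
              B * (∏ r ∈ Finset.range (xt + busyP a), θ r) *
              (∏ i, ρ i ^ x i / (x i).factorial) *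
              ∏ l, fac (α l) (β l) (u l) (v l) (a l) := by
            refine Finset.sum_congr rfl fun x hx => ?_
            rw [hp, Finset.Nat.mem_antidiagonalTuple.mp hx]
        _ = B * (∏ r ∈ Finset.range (xt + busyP a), θ r) *
              (∑ x ∈ Finset.Nat.antidiagonalTuple k xt,
                ∏ i, ρ i ^ x i / (x i).factorial) *
              ∏ l, fac (α l) (β l) (u l) (v l) (a l) := by
            rw [← Finset.sum_mul, ← Finset.mul_sum]
        _ = _ := by rw [multinom_sum, hfj]; ring
    calc ∑ xt ∈ Finset.range (m + 1 - busyP a),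
          ∑ x ∈ Finset.Nat.antidiagonalTuple k xt, p x a
        = ∑ xt ∈ Finset.range (m + 1 - busyP a),
            B * ((∏ r ∈ Finset.range (xt + busyP a), θ r) *
              ((∑ i, ρ i) ^ xt / xt.factorial) * F a) :=
          Finset.sum_congr rfl fun xt _ => hsum xt
      _ = G (busyP a) * F a := by
          simp only [hG]
          rw [Finset.mul_sum, Finset.sum_mul]
          exact Finset.sum_congr rfl fun xt _ => by ring
  rw [hPI, Finset.sum_congr rfl key]
  have hmaps : ∀ a ∈ Finset.univ.filter (fun a : Fin n → Act => a j = Act.I),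
      busyP a ∈ Finset.range n := by
    intro a ha
    simp only [Finset.mem_filter] at ha
    have hsub : Finset.univ.filter (fun l => a l = Act.T) ⊆ Finset.univ.erase j := by
      intro l hl
      simp only [Finset.mem_filter] at hl
      refine Finset.mem_erase.mpr ⟨fun h => ?_, Finset.mem_univ l⟩
      rw [h, ha.2] at hl; exact absurd hl.2 (by simp)
    have hc := Finset.card_le_card hsub
    rw [Finset.card_erase_of_mem (Finset.mem_univ j), Finset.card_univ,
      Fintype.card_fin] at hc
    simp only [Finset.mem_range, busyP]
    omega
  rw [← Finset.sum_fiberwise_of_maps_to hmaps]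
  have step2 : ∀ b ∈ Finset.range n,
      (∑ a ∈ (Finset.univ.filter (fun a : Fin n → Act => a j = Act.I)).filter
        (fun a => busyP a = b), G (busyP a) * F a) = G b * cj b := by
    intro b hb
    rw [hcj, Finset.mul_sum, Finset.filter_filter]
    refine Finset.sum_congr rfl fun a ha => ?_
    simp only [Finset.mem_filter] at ha
    rw [ha.2.2]
  rw [Finset.sum_congr rfl step2]
  have hsub : Finset.range (min (n - 1) m + 1) ⊆ Finset.range n :=
    Finset.range_subset_range.mpr (by omega)
  have hvanish : ∀ b ∈ Finset.range n, b ∉ Finset.range (min (n - 1) m + 1) →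
      G b * cj b = 0 := by
    intro b hb hnb
    simp only [Finset.mem_range] at hb hnb
    have hbm : m < b := by omega
    have h0 : m + 1 - b = 0 := by omega
    simp only [hG, h0]
    simp
  rw [← Finset.sum_subset hsub hvanish, Finset.mul_sum]
  refine Finset.sum_congr rfl fun b hb => ?_
  simp only [Finset.mem_range] at hb
  have hbm : b ≤ m := by omega
  simp only [hG]
  rw [show m + 1 - b = m - b + 1 by omega, mul_assoc, Finset.sum_mul, Finset.mul_sum]
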